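/- Let x, y ∈ ℕ with x ≠ y, let r ≥ 1 be the least positive integer with ⌊x/p^r⌋ = ⌊y/p^r⌋ (so the hierarchical distance of x and y is p^r and λ(x⋏y) = κ^(r−1)). Then for every real λ with λ > κ^(r−1) that is not in the spectrum of D^α, the resolvent kernel R(λ, x, y) is real and satisfies the strict two-sided bound 0 < R(λ, x, y) < p^(−r) / (λ − κ^(r−1)). -/

import Mathlib

/-- `kappa p α = p ^ (-α)`. -/
noncomputable def kappa (p : ℕ) (α : ℝ) : ℝ := (p : ℝ) ^ (-α)

/-- The p-adic interval of rank `r` containing `x`: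
`{y : ℕ | ⌊y / p^r⌋ = ⌊x / p^r⌋} = {y | k p^r ≤ y < (k+1) p^r}` with `k = x / p^r`. -/
def block (p r x : ℕ) : Finset ℕ :=
  Finset.Ico (x / p ^ r * p ^ r) ((x / p ^ r + 1) * p ^ r)

/-- `D` is the Dyson hierarchical Laplacian `D^α` on `ℓ²(ℕ; ℂ)`:
`(D f)(x) = Σ_{r ≥ 1} (1 - κ) κ^(r-1) (f x - p^(-r) Σ_{y ∈ I_r(x)} f y)`. -/
def IsDyson (p : ℕ) (α : ℝ)
    (D : lp (fun _ : ℕ => ℂ) 2 →L[ℂ] lp (fun _ : ℕ => ℂ) 2) : Prop :=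
  ∀ (f : lp (fun _ : ℕ => ℂ) 2) (x : ℕ),
    D f x = ∑' r : ℕ, (((1 - kappa p α) * kappa p α ^ r : ℝ) : ℂ) *
      (f x - ((p : ℂ) ^ (r + 1))⁻¹ * ∑ y ∈ block p (r + 1) x, f y)


section aux
variable {p : ℕ} (hp : 2 ≤ p)

lemma mem_block {s z w : ℕ} (hp : 2 ≤ p) : w ∈ block p s z ↔ w / p ^ s = z / p ^ s := by
  have hq : 0 < p ^ s := pow_pos (by omega) s
  rw [block, Finset.mem_Ico]
  constructor
  · rintro ⟨h1, h2⟩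
    have := Nat.div_le_div_right (c := p ^ s) h1
    rw [Nat.mul_div_cancel _ hq] at this
    have h3 : w / p ^ s < z / p ^ s + 1 := by
      exact Nat.div_lt_of_lt_mul (by rw [Nat.mul_comm]; exact h2)
    omega
  · intro h
    constructor
    · rw [← h]; exact Nat.div_mul_le_self w _
    · rw [← h]
      have h1 := Nat.div_add_mod w (p ^ s)
      have h2 := Nat.mod_lt w hq
      rw [add_mul, one_mul, Nat.mul_comm]
      omega

lemma card_block (hp : 2 ≤ p) (s z : ℕ) : (block p s z).card = p ^ s := by
  rw [block, Nat.card_Ico]; ring_nf; omega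

lemma self_mem_block (hp : 2 ≤ p) (s z : ℕ) : z ∈ block p s z := (mem_block hp).2 rfl

lemma div_eq_of_le {s t z w : ℕ} (hp : 2 ≤ p) (hst : s ≤ t)
    (h : w / p ^ s = z / p ^ s) : w / p ^ t = z / p ^ t := by
  have : p ^ t = p ^ s * p ^ (t - s) := by rw [← pow_add]; congr 1; omega
  rw [this, ← Nat.div_div_eq_div_mul, ← Nat.div_div_eq_div_mul, h]

end aux

section aux2
variable {p : ℕ}

/-- counting lemma: sum over a block of rank `s` of the indicator of the rank-`t`
block of `y` (with `t ≤ s`). -/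
lemma sum_indicator_block (hp : 2 ≤ p) {s t : ℕ} (hts : t ≤ s) (z y : ℕ) (c : ℂ) :
    ∑ w ∈ block p s z, (if w / p ^ t = y / p ^ t then c else 0)
      = if z / p ^ s = y / p ^ s then (p ^ t : ℂ) * c else 0 := by
  have hfilter : (block p s z).filter (fun w => w / p ^ t = y / p ^ t)
      = if z / p ^ s = y / p ^ s then block p t y else ∅ := by
    split_ifs with h
    · ext w
      simp only [Finset.mem_filter, mem_block hp]
      constructor
      · rintro ⟨_, h2⟩; exact h2
      · intro hw; exact ⟨(div_eq_of_le hp hts hw).trans h.symm, hw⟩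
    · ext w
      simp only [Finset.mem_filter, mem_block hp, Finset.notMem_empty, iff_false, not_and]
      intro h1 h2
      exact h (h1.symm.trans (div_eq_of_le hp hts h2))
  rw [← Finset.sum_filter, hfilter]
  split_ifs with h
  · rw [Finset.sum_const, card_block hp, nsmul_eq_mul]
    push_cast
    ring
  · simp

end aux2

section aux3
variable {p : ℕ}

noncomputable def phi (p y t w : ℕ) : ℂ :=
  (if w / p ^ t = y / p ^ t then ((p : ℂ) ^ t)⁻¹ else 0) -
  (if w / p ^ (t+1) = y / p ^ (t+1) then ((p : ℂ) ^ (t+1))⁻¹ else 0)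

noncomputable def chi (p y s : ℕ) : lp (fun _ : ℕ => ℂ) 2 :=
  ∑ a ∈ block p s y, lp.single 2 a 1

noncomputable def Vv (p y t : ℕ) : lp (fun _ : ℕ => ℂ) 2 :=
  ((p : ℂ) ^ t)⁻¹ • chi p y t - ((p : ℂ) ^ (t+1))⁻¹ • chi p y (t+1)

lemma chi_apply (hp : 2 ≤ p) (y s w : ℕ) :
    (chi p y s : ∀ _ : ℕ, ℂ) w = if w / p ^ s = y / p ^ s then 1 else 0 := by
  have h1 : (chi p y s : ∀ _ : ℕ, ℂ) w = if w ∈ block p s y then 1 else 0 := by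
    have hs := congrFun (lp.coeFn_sum (fun a => lp.single 2 a (1:ℂ)) (block p s y)) w
    simp only [Finset.sum_apply, lp.single_apply, Pi.single_apply] at hs
    rw [chi]
    exact hs.trans (by simp [Finset.sum_ite_eq'])
  rw [h1]
  simp [mem_block hp]

lemma Vv_apply (hp : 2 ≤ p) (y t w : ℕ) :
    (Vv p y t : ∀ _ : ℕ, ℂ) w = phi p y t w := by
  simp only [Vv, lp.coeFn_sub, lp.coeFn_smul, Pi.sub_apply, Pi.smul_apply,
    chi_apply hp, phi, smul_eq_mul]
  split_ifs <;> ring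

lemma sqrt_pow' {a : ℝ} (h : 0 ≤ a) (t : ℕ) : Real.sqrt (a ^ t) = Real.sqrt a ^ t := by
  induction t with
  | zero => simp
  | succ n ih => rw [pow_succ, pow_succ, Real.sqrt_mul (pow_nonneg h n), ih]

lemma norm_chi (hp : 2 ≤ p) (y s : ℕ) : ‖chi p y s‖ = Real.sqrt ((p : ℝ) ^ s) := by
  have h := lp.norm_sum_single (p := 2) (E := fun _ : ℕ => ℂ) (by norm_num)
    (fun _ : ℕ => (1 : ℂ)) (block p s y)
  simp only [norm_one, Real.one_rpow, Finset.sum_const, card_block hp, nsmul_eq_mul,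
    mul_one] at h
  rw [show ENNReal.toReal 2 = (2 : ℝ) from by norm_num] at h
  have h2 : ‖chi p y s‖ ^ (2 : ℝ) = (p : ℝ) ^ s := by
    rw [chi, h]; push_cast; ring
  have h3 : ‖chi p y s‖ ^ (2 : ℕ) = (p : ℝ) ^ s := by
    rw [← h2, ← Real.rpow_natCast]; norm_num
  rw [← h3, Real.sqrt_sq (norm_nonneg _)]

end aux3

section aux4
variable {p : ℕ} {α : ℝ}

lemma kappa_pos (hp : 2 ≤ p) (α : ℝ) : 0 < kappa p α :=
  Real.rpow_pos_of_pos (by positivity) _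

lemma kappa_lt_one (hp : 2 ≤ p) (hα : 0 < α) : kappa p α < 1 :=
  Real.rpow_lt_one_of_one_lt_of_neg (by exact_mod_cast by omega) (by linarith)

lemma ppow_ne_zero (hp : 2 ≤ p) (t : ℕ) : ((p : ℂ) ^ t) ≠ 0 := by
  have : (p : ℂ) ≠ 0 := by exact_mod_cast (by omega : p ≠ 0)
  exact pow_ne_zero _ this

lemma sum_phi_small (hp : 2 ≤ p) {s t : ℕ} (hst : s ≤ t) (z y : ℕ) :
    ∑ w ∈ block p s z, phi p y t w = (p : ℂ) ^ s * phi p y t z := by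
  have hc : ∀ w ∈ block p s z, phi p y t w = phi p y t z := by
    intro w hw
    have hw' := (mem_block hp).1 hw
    unfold phi
    rw [div_eq_of_le hp hst hw', div_eq_of_le hp (hst.trans (Nat.le_succ t)) hw']
  rw [Finset.sum_congr rfl hc, Finset.sum_const, card_block hp, nsmul_eq_mul]
  push_cast
  ring

lemma sum_phi_big (hp : 2 ≤ p) {s t : ℕ} (hts : t + 1 ≤ s) (z y : ℕ) :
    ∑ w ∈ block p s z, phi p y t w = 0 := by
  unfold phi
  rw [Finset.sum_sub_distrib, sum_indicator_block hp (Nat.le_of_succ_le hts) z y,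
    sum_indicator_block hp hts z y]
  split_ifs with h
  · rw [mul_inv_cancel₀ (ppow_ne_zero hp t), mul_inv_cancel₀ (ppow_ne_zero hp (t+1))]
    ring
  · ring

set_option maxHeartbeats 1000000 in
lemma eigen (hp : 2 ≤ p) (hα : 0 < α)
    {D : lp (fun _ : ℕ => ℂ) 2 →L[ℂ] lp (fun _ : ℕ => ℂ) 2}
    (hD : IsDyson p α D) (y t : ℕ) :
    D (Vv p y t) = ((kappa p α ^ t : ℝ) : ℂ) • Vv p y t := by
  have hκ0 := kappa_pos hp α
  have hκ1 := kappa_lt_one hp hα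
  apply lp.ext
  funext z
  rw [hD (Vv p y t) z]
  set X : ℂ := phi p y t z with hX
  have hterm : ∀ m : ℕ, (((1 - kappa p α) * kappa p α ^ m : ℝ) : ℂ) *
      ((Vv p y t) z - ((p : ℂ) ^ (m + 1))⁻¹ * ∑ w ∈ block p (m + 1) z, (Vv p y t) w)
      = (if t ≤ m then (((1 - kappa p α) * kappa p α ^ m : ℝ) : ℂ) * X else 0) := by
    intro m
    have hsum : ∑ w ∈ block p (m + 1) z, (Vv p y t) w = ∑ w ∈ block p (m + 1) z, phi p y t w :=
      Finset.sum_congr rfl fun w _ => by rw [Vv_apply hp]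
    rw [Vv_apply hp, hsum, ← hX]
    by_cases hm : t ≤ m
    · rw [if_pos hm, sum_phi_big hp (by omega) z y]
      ring
    · rw [if_neg hm, sum_phi_small hp (by omega) z y, ← hX,
        inv_mul_cancel_left₀ (ppow_ne_zero hp (m+1))]
      ring
  rw [tsum_congr hterm]
  set F : ℕ → ℂ := fun m => if t ≤ m then (((1 - kappa p α) * kappa p α ^ m : ℝ) : ℂ) * X else 0
    with hF
  have hκc : ‖((kappa p α : ℝ) : ℂ)‖ < 1 := by
    rw [Complex.norm_real, Real.norm_eq_abs, abs_of_pos hκ0]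
    exact hκ1
  have h1κ : (1 : ℂ) - ((kappa p α : ℝ) : ℂ) ≠ 0 := by
    intro h
    have : ((kappa p α : ℝ) : ℂ) = 1 := by linear_combination -h
    rw [Complex.ofReal_eq_one] at this
    linarith
  have h1 : HasSum (fun n : ℕ => F (n + t)) (((kappa p α ^ t : ℝ) : ℂ) * X) := by
    have hg := (hasSum_geometric_of_norm_lt_one hκc).mul_left
      ((((1 - kappa p α) * kappa p α ^ t : ℝ) : ℂ) * X)
    have hval : (((1 - kappa p α) * kappa p α ^ t : ℝ) : ℂ) * X * (1 - ((kappa p α : ℝ) : ℂ))⁻¹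
        = ((kappa p α ^ t : ℝ) : ℂ) * X := by
      field_simp
      push_cast
      ring
    rw [hval] at hg
    have hfun : (fun n : ℕ => F (n + t)) = fun i => (((1 - kappa p α) * kappa p α ^ t : ℝ) : ℂ) * X * ((kappa p α : ℝ) : ℂ) ^ i := by
      funext n
      rw [hF]
      simp only []
      rw [if_pos (by omega : t ≤ n + t)]
      push_cast
      ring
    rw [hfun]; exact hg
  have h2 := (hasSum_nat_add_iff (f := F) t).mp h1
  have h3 : ∑ i ∈ Finset.range t, F i = 0 := by
    apply Finset.sum_eq_zero
    intro i hi
    rw [hF]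
    simp only []
    rw [if_neg (by simp at hi; omega)]
  rw [h3, add_zero] at h2
  rw [h2.tsum_eq, lp.coeFn_smul, Pi.smul_apply, Vv_apply hp, smul_eq_mul]

end aux4

section aux5
variable {p : ℕ}

noncomputable def Ww (p y s : ℕ) : lp (fun _ : ℕ => ℂ) 2 :=
  ((p : ℂ) ^ s)⁻¹ • chi p y s

lemma Vv_eq_sub (p y t : ℕ) : Vv p y t = Ww p y t - Ww p y (t + 1) := rfl

lemma Ww_zero (hp : 2 ≤ p) (y : ℕ) : Ww p y 0 = lp.single 2 y 1 := by
  apply lp.ext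
  funext w
  rw [Ww, lp.coeFn_smul, Pi.smul_apply, chi_apply hp, smul_eq_mul]
  simp only [pow_zero, Nat.pow_zero, Nat.div_one, inv_one, one_mul, lp.single_apply]
  split_ifs with h1 h2 h2 <;> simp_all

lemma norm_Ww (hp : 2 ≤ p) (y s : ℕ) :
    ‖Ww p y s‖ = ((Real.sqrt p)⁻¹) ^ s := by
  have hp0 : (0 : ℝ) < p := by positivity
  have hsq : Real.sqrt p ^ 2 = (p : ℝ) := Real.sq_sqrt hp0.le
  have hs0 : Real.sqrt p ≠ 0 := by positivity
  rw [Ww, norm_smul, norm_chi hp, sqrt_pow' hp0.le, norm_inv, norm_pow, Complex.norm_natCast]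
  have hps : (Real.sqrt p ^ s) ^ 2 = (p : ℝ) ^ s := by
    rw [← pow_mul, mul_comm, pow_mul, hsq]
  have hss : Real.sqrt p ^ s ≠ 0 := pow_ne_zero _ hs0
  rw [← hps, sq, mul_inv, mul_assoc, inv_mul_cancel₀ hss, mul_one, inv_pow]

lemma norm_Vv_le (hp : 2 ≤ p) (y t : ℕ) :
    ‖Vv p y t‖ ≤ 2 * ((Real.sqrt p)⁻¹) ^ t := by
  have hq0 : 0 ≤ (Real.sqrt p)⁻¹ := by positivity
  have hq1 : (Real.sqrt p)⁻¹ ≤ 1 := by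
    rw [inv_le_one_iff₀]
    right
    rw [show (1:ℝ) = Real.sqrt 1 by simp]
    exact Real.sqrt_le_sqrt (by exact_mod_cast by omega)
  calc ‖Vv p y t‖ = ‖Ww p y t - Ww p y (t+1)‖ := by rw [Vv_eq_sub]
    _ ≤ ‖Ww p y t‖ + ‖Ww p y (t+1)‖ := norm_sub_le _ _
    _ = ((Real.sqrt p)⁻¹) ^ t + ((Real.sqrt p)⁻¹) ^ (t+1) := by rw [norm_Ww hp, norm_Ww hp]
    _ ≤ ((Real.sqrt p)⁻¹) ^ t + ((Real.sqrt p)⁻¹) ^ t := by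
        have h := pow_le_pow_of_le_one hq0 hq1 (Nat.le_succ t)
        simp only [Nat.succ_eq_add_one] at h
        linarith
    _ = 2 * ((Real.sqrt p)⁻¹) ^ t := by ring

lemma sqrt_inv_lt_one (hp : 2 ≤ p) : (Real.sqrt p)⁻¹ < 1 := by
  rw [inv_lt_one_iff₀]
  right
  rw [show (1:ℝ) = Real.sqrt 1 by simp]
  exact Real.sqrt_lt_sqrt (by norm_num) (by exact_mod_cast by omega)

lemma summable_Vv (hp : 2 ≤ p) (y : ℕ) : Summable (fun t => Vv p y t) := by
  apply Summable.of_norm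
  apply Summable.of_nonneg_of_le (fun t => norm_nonneg _) (norm_Vv_le hp y)
  exact (summable_geometric_of_lt_one (by positivity) (sqrt_inv_lt_one hp)).mul_left 2

lemma hasSum_Vv (hp : 2 ≤ p) (y : ℕ) :
    HasSum (fun t => Vv p y t) (lp.single 2 y 1) := by
  have hsummable := summable_Vv hp y
  have hhs := hsummable.hasSum
  have htel : ∀ n, ∑ i ∈ Finset.range n, Vv p y i = lp.single 2 y 1 - Ww p y n := by
    intro n
    have : ∀ i, Vv p y i = Ww p y i - Ww p y (i+1) := fun i => Vv_eq_sub p y i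
    rw [Finset.sum_congr rfl (fun i _ => this i), Finset.sum_range_sub' (Ww p y) n,
      Ww_zero hp]
  have hW0 : Filter.Tendsto (fun n => Ww p y n) Filter.atTop (nhds 0) := by
    apply squeeze_zero_norm (fun n => (norm_Ww hp y n).le)
    exact tendsto_pow_atTop_nhds_zero_of_lt_one (by positivity) (sqrt_inv_lt_one hp)
  have htend2 : Filter.Tendsto (fun n => ∑ i ∈ Finset.range n, Vv p y i) Filter.atTop
      (nhds (lp.single 2 y 1)) := by
    simp only [htel]
    have := Filter.Tendsto.sub (tendsto_const_nhds (x := lp.single 2 y 1 (E := fun _ : ℕ => ℂ))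
      (f := Filter.atTop (α := ℕ))) hW0
    simpa using this
  have := tendsto_nhds_unique hhs.tendsto_sum_nat htend2
  rwa [this] at hhs

end aux5

lemma hasSum_apply {F : ℕ → lp (fun _ : ℕ => ℂ) 2} {g : lp (fun _ : ℕ => ℂ) 2}
    (h : HasSum F g) (x : ℕ) : HasSum (fun t => (F t : ∀ _ : ℕ, ℂ) x) ((g : ∀ _ : ℕ, ℂ) x) := by
  have h2 := h.mapL (innerSL ℂ (lp.single 2 x 1))
  have he : ∀ f : lp (fun _ : ℕ => ℂ) 2, (innerSL ℂ (lp.single 2 x 1)) f = (f : ∀ _ : ℕ, ℂ) x := by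
    intro f
    rw [innerSL_apply_apply, lp.inner_single_left]
    simp [RCLike.inner_apply]
  simpa only [he] using h2


set_option maxHeartbeats 1000000 in
theorem stmt_8 (p : ℕ) (hp : 2 ≤ p) (α : ℝ) (hα : 0 < α)
    (D : lp (fun _ : ℕ => ℂ) 2 →L[ℂ] lp (fun _ : ℕ => ℂ) 2)
    (hDsa : IsSelfAdjoint D) (hD : IsDyson p α D)
    (x y : ℕ) (hxy : x ≠ y) (r : ℕ)
    -- `r ≥ 1` is the least positive integer with `⌊x / p^r⌋ = ⌊y / p^r⌋`,
    -- so the hierarchical distance of `x, y` is `p^r` and `λ(x ⋏ y) = κ^(r-1)`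
    (hr : IsLeast {s : ℕ | 1 ≤ s ∧ x / p ^ s = y / p ^ s} r)
    (lam : ℝ) (hlam : kappa p α ^ (r - 1) < lam)
    (hsp : (lam : ℂ) ∉ spectrum ℂ D) :
    -- `R(λ, x, y)` is real and `0 < R(λ, x, y) < p^(-r) / (λ - κ^(r-1))`
    (Ring.inverse (D - (lam : ℂ) • 1) (lp.single 2 y 1) x).im = 0 ∧
    0 < (Ring.inverse (D - (lam : ℂ) • 1) (lp.single 2 y 1) x).re ∧
    (Ring.inverse (D - (lam : ℂ) • 1) (lp.single 2 y 1) x).re <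
      ((p : ℝ) ^ r)⁻¹ / (lam - kappa p α ^ (r - 1)) := by
  have hκ0 := kappa_pos hp α
  have hκ1 := kappa_lt_one hp hα
  obtain ⟨⟨hr1, hrdiv⟩, hrmin⟩ := hr
  have hdiv_iff : ∀ t, (x / p ^ t = y / p ^ t ↔ r ≤ t) := by
    intro t
    constructor
    · intro h
      by_contra hlt
      push_neg at hlt
      rcases Nat.eq_zero_or_pos t with h0 | h1
      · subst h0
        simp only [pow_zero, Nat.div_one] at h
        exact hxy h
      · exact absurd (hrmin ⟨h1, h⟩) (by omega)
    · intro h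
      exact div_eq_of_le hp h hrdiv
  -- λ•1 - D is a unit
  have hu : IsUnit ((lam : ℂ) • (1 : lp (fun _ : ℕ => ℂ) 2 →L[ℂ] lp (fun _ : ℕ => ℂ) 2) - D) := by
    have := spectrum.notMem_iff.mp hsp
    rwa [Algebra.algebraMap_eq_smul_one] at this
  -- λ is not any eigenvalue κ^t
  have hlamne : ∀ t : ℕ, lam ≠ kappa p α ^ t := by
    intro t heq
    obtain ⟨u, huu⟩ := hu
    have h0 : ((lam : ℂ) • (1 : lp (fun _ : ℕ => ℂ) 2 →L[ℂ] lp (fun _ : ℕ => ℂ) 2) - D)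
        (Vv p y t) = 0 := by
      rw [ContinuousLinearMap.sub_apply, ContinuousLinearMap.smul_apply,
        ContinuousLinearMap.one_apply, eigen hp hα hD y t, heq]
      push_cast
      rw [sub_self]
    have hVz : Vv p y t = 0 := by
      calc Vv p y t = ((↑u⁻¹ * ↑u : lp (fun _ : ℕ => ℂ) 2 →L[ℂ] lp (fun _ : ℕ => ℂ) 2))
            (Vv p y t) := by rw [Units.inv_mul]; rfl
        _ = (↑u⁻¹ : lp (fun _ : ℕ => ℂ) 2 →L[ℂ] lp (fun _ : ℕ => ℂ) 2)
            ((↑u : lp (fun _ : ℕ => ℂ) 2 →L[ℂ] lp (fun _ : ℕ => ℂ) 2) (Vv p y t)) := rfl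
        _ = 0 := by rw [huu, h0, map_zero]
    have hVy : (Vv p y t : ∀ _ : ℕ, ℂ) y = 0 := by rw [hVz]; rfl
    rw [Vv_apply hp] at hVy
    unfold phi at hVy
    rw [if_pos rfl, if_pos rfl] at hVy
    have hne : ((p : ℂ) ^ t)⁻¹ ≠ ((p : ℂ) ^ (t + 1))⁻¹ := by
      rw [Ne, inv_inj]
      intro h
      have : ((p ^ t : ℕ) : ℂ) = ((p ^ (t + 1) : ℕ) : ℂ) := by push_cast; exact h
      rw [Nat.cast_inj] at this
      have := Nat.pow_lt_pow_succ (a := p) (by omega) (n := t)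
      omega
    exact hne (by linear_combination hVy)
  have hcne : ∀ t : ℕ, (kappa p α ^ t - lam : ℝ) ≠ 0 := fun t h =>
    hlamne t (by linarith [sub_eq_zero.mp h])
  have hlam1 : 0 < lam - kappa p α ^ (r - 1) := by linarith
  -- uniform bound on the resolvent coefficients
  set C : ℝ := (lam - kappa p α ^ (r - 1))⁻¹ +
    ∑ t ∈ Finset.range r, |kappa p α ^ t - lam|⁻¹ with hC
  have hCb : ∀ t : ℕ, |kappa p α ^ t - lam|⁻¹ ≤ C := by
    intro t
    have hsum_nonneg : (0:ℝ) ≤ ∑ t ∈ Finset.range r, |kappa p α ^ t - lam|⁻¹ :=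
      Finset.sum_nonneg fun i _ => by positivity
    by_cases ht : t < r
    · have h1 : |kappa p α ^ t - lam|⁻¹ ≤ ∑ t ∈ Finset.range r, |kappa p α ^ t - lam|⁻¹ :=
        Finset.single_le_sum (f := fun t => |kappa p α ^ t - lam|⁻¹)
          (fun i _ => by positivity) (Finset.mem_range.2 ht)
      have h2 : (0:ℝ) ≤ (lam - kappa p α ^ (r - 1))⁻¹ := by positivity
      rw [hC]; linarith
    · push_neg at ht
      have h2 : kappa p α ^ t ≤ kappa p α ^ (r - 1) :=
        pow_le_pow_of_le_one hκ0.le hκ1.le (by omega)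
      have h3 : |kappa p α ^ t - lam| = lam - kappa p α ^ t := by
        rw [abs_of_nonpos (by linarith)]; ring
      rw [h3]
      have h4 : (lam - kappa p α ^ t)⁻¹ ≤ (lam - kappa p α ^ (r - 1))⁻¹ := by
        apply inv_anti₀ hlam1
        linarith
      rw [hC]; linarith
  -- the explicit resolvent vector
  set c : ℕ → ℂ := fun t => (((kappa p α ^ t - lam : ℝ) : ℝ) : ℂ)⁻¹ with hc
  have hnorm_c : ∀ t, ‖c t‖ = |kappa p α ^ t - lam|⁻¹ := by
    intro t
    rw [hc]
    rw [norm_inv, Complex.norm_real, Real.norm_eq_abs]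
  have hsummg : Summable (fun t => c t • Vv p y t) := by
    apply Summable.of_norm
    apply Summable.of_nonneg_of_le (fun t => norm_nonneg _) (fun t => ?_)
      ((summable_geometric_of_lt_one (by positivity) (sqrt_inv_lt_one hp)).mul_left (C * 2))
    rw [norm_smul, hnorm_c]
    calc |kappa p α ^ t - lam|⁻¹ * ‖Vv p y t‖ ≤ C * (2 * ((Real.sqrt p)⁻¹) ^ t) := by
          apply mul_le_mul (hCb t) (norm_Vv_le hp y t) (norm_nonneg _)
          exact le_trans (by positivity) (hCb 0)
      _ = C * 2 * ((Real.sqrt p)⁻¹) ^ t := by ring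
  set g : lp (fun _ : ℕ => ℂ) 2 := ∑' t, c t • Vv p y t with hg
  have hgsum : HasSum (fun t => c t • Vv p y t) g := hsummg.hasSum
  have heach : ∀ t, (D - (lam : ℂ) • 1) (c t • Vv p y t) = Vv p y t := by
    intro t
    rw [map_smul, ContinuousLinearMap.sub_apply, eigen hp hα hD y t,
      ContinuousLinearMap.smul_apply, ContinuousLinearMap.one_apply, ← sub_smul, smul_smul]
    have hcast : (((kappa p α ^ t : ℝ)) : ℂ) - (lam : ℂ) = (((kappa p α ^ t - lam : ℝ)) : ℂ) := by
      push_cast; ring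
    rw [hcast, hc, inv_mul_cancel₀ (by exact_mod_cast hcne t), one_smul]
  have hresolv : (D - (lam : ℂ) • 1) g = lp.single 2 y 1 := by
    have hmap := hgsum.mapL (D - (lam : ℂ) • 1)
    simp only [heach] at hmap
    exact hmap.unique (hasSum_Vv hp y)
  have hu2 : IsUnit (D - (lam : ℂ) • 1) := by
    have := hu.neg
    rwa [neg_sub] at this
  have hginv : Ring.inverse (D - (lam : ℂ) • 1) (lp.single 2 y 1) = g := by
    rw [← hresolv]
    have h1 : Ring.inverse (D - (lam : ℂ) • 1) * (D - (lam : ℂ) • 1) = 1 :=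
      Ring.inverse_mul_cancel _ hu2
    calc Ring.inverse (D - (lam : ℂ) • 1) ((D - (lam : ℂ) • 1) g)
        = (Ring.inverse (D - (lam : ℂ) • 1) * (D - (lam : ℂ) • 1)) g := rfl
      _ = g := by rw [h1]; rfl
  rw [hginv]
  -- pointwise evaluation at x
  have hxval := hasSum_apply hgsum x
  set b : ℕ → ℝ := fun t => (kappa p α ^ t - lam)⁻¹ *
    ((if r ≤ t then ((p:ℝ)^t)⁻¹ else 0) - (if r ≤ t+1 then ((p:ℝ)^(t+1))⁻¹ else 0)) with hb
  have hterm : ∀ t, ((c t • Vv p y t : lp (fun _ : ℕ => ℂ) 2) : ∀ _ : ℕ, ℂ) x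
      = ((b t : ℝ) : ℂ) := by
    intro t
    rw [lp.coeFn_smul, Pi.smul_apply, Vv_apply hp, smul_eq_mul, hc, hb]
    unfold phi
    simp only []
    by_cases h1 : r ≤ t
    · rw [if_pos ((hdiv_iff t).2 h1), if_pos ((hdiv_iff (t+1)).2 (by omega)), if_pos h1,
        if_pos (show r ≤ t + 1 by omega)]
      push_cast
      ring
    · by_cases h2 : r ≤ t + 1
      · rw [if_neg (fun h => h1 ((hdiv_iff t).1 h)), if_pos ((hdiv_iff (t+1)).2 h2),
          if_neg h1, if_pos h2]
        push_cast
        ring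
      · rw [if_neg (fun h => h1 ((hdiv_iff t).1 h)), if_neg (fun h => h2 ((hdiv_iff (t+1)).1 h)),
          if_neg h1, if_neg h2]
        push_cast
        ring
  rw [funext hterm] at hxval
  have hre : HasSum b (((g : ∀ _ : ℕ, ℂ) x).re) := by
    have h := hxval.mapL Complex.reCLM
    simpa using h
  have him : (((g : ∀ _ : ℕ, ℂ) x).im) = 0 := by
    have h := hxval.mapL Complex.imCLM
    have h2 : HasSum (fun _ : ℕ => (0:ℝ)) (((g : ∀ _ : ℕ, ℂ) x).im) := by simpa using h
    exact (h2.unique hasSum_zero)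
  set M : ℝ := ((p:ℝ)^r)⁻¹ * (lam - kappa p α ^ (r-1))⁻¹ with hM
  have hMpos : 0 < M := by positivity
  have hsum_range : ∑ t ∈ Finset.range r, b t = M := by
    rw [Finset.sum_eq_single_of_mem (r-1) (Finset.mem_range.2 (by omega))]
    · rw [hb]
      simp only []
      rw [if_neg (show ¬ r ≤ r - 1 by omega), if_pos (show r ≤ r - 1 + 1 by omega),
        show r - 1 + 1 = r by omega,
        show kappa p α ^ (r-1) - lam = -(lam - kappa p α ^ (r-1)) by ring, inv_neg, hM]
      ring
    · intro i hi hne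
      simp only [Finset.mem_range] at hi
      rw [hb]
      simp only []
      rw [if_neg (show ¬ r ≤ i by omega), if_neg (show ¬ r ≤ i + 1 by omega)]
      simp
  have hbsummable := hre.summable
  have htail_eq : ∑ t ∈ Finset.range r, b t + ∑' k, b (k + r) = ((g : ∀ _ : ℕ, ℂ) x).re :=
    (Summable.sum_add_tsum_nat_add r hbsummable).trans hre.tsum_eq
  set T : ℝ := ∑' k, b (k + r) with hT
  have hAeq : (((g : ∀ _ : ℕ, ℂ) x).re) = M + T := by rw [← htail_eq, hsum_range]
  have h1p : (1:ℝ) < p := by exact_mod_cast (by omega : 1 < p)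
  have hq : (0:ℝ) < (p:ℝ)⁻¹ := by positivity
  have hq1 : (p:ℝ)⁻¹ < 1 := by
    rw [inv_lt_one_iff₀]
    right
    exact h1p
  set f : ℕ → ℝ := fun k => (lam - kappa p α ^ (k + r))⁻¹ *
    (((p:ℝ)^(k+r))⁻¹ - ((p:ℝ)^(k+r+1))⁻¹) with hf
  have hbtail : ∀ k, b (k + r) = -(f k) := by
    intro k
    rw [hb, hf]
    simp only []
    rw [if_pos (show r ≤ k + r by omega), if_pos (show r ≤ k + r + 1 by omega),
      show kappa p α ^ (k+r) - lam = -(lam - kappa p α ^ (k+r)) by ring, inv_neg]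
    ring
  have hlamt : ∀ k : ℕ, lam - kappa p α ^ (r-1) ≤ lam - kappa p α ^ (k+r) := by
    intro k
    have := pow_le_pow_of_le_one hκ0.le hκ1.le (show r - 1 ≤ k + r by omega)
    linarith
  have hmono : ∀ s : ℕ, ((p:ℝ)^(s+1))⁻¹ < ((p:ℝ)^s)⁻¹ := by
    intro s
    rw [inv_lt_inv₀ (by positivity) (by positivity)]
    exact pow_lt_pow_right₀ h1p (by omega)
  have hfpos : ∀ k, 0 < f k := by
    intro k
    apply mul_pos
    · rw [inv_pos]
      linarith [hlamt k]
    · linarith [hmono (k + r)]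
  set Mc : ℝ := (lam - kappa p α ^ (r-1))⁻¹ * (((p:ℝ)^r)⁻¹ * (1 - (p:ℝ)⁻¹)) with hMc
  set gg : ℕ → ℝ := fun k => Mc * ((p:ℝ)⁻¹)^k with hgg
  have hppne : ((p:ℝ)) ≠ 0 := by positivity
  have hsplit : ∀ k : ℕ, ((p:ℝ)^(k+r))⁻¹ - ((p:ℝ)^(k+r+1))⁻¹
      = ((p:ℝ)^r)⁻¹ * (1 - (p:ℝ)⁻¹) * ((p:ℝ)⁻¹)^k := by
    intro k
    rw [pow_add, pow_add, pow_succ, inv_pow]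
    field_simp
    ring
  have hAnn : (0:ℝ) ≤ ((p:ℝ)^r)⁻¹ * (1 - (p:ℝ)⁻¹) := by
    apply mul_nonneg (by positivity)
    linarith
  have hfg : ∀ k, f k ≤ gg k := by
    intro k
    rw [hf, hgg]
    simp only []
    rw [hsplit k]
    have h1 : (lam - kappa p α ^ (k + r))⁻¹ ≤ (lam - kappa p α ^ (r-1))⁻¹ :=
      inv_anti₀ hlam1 (hlamt k)
    have hcnn : (0:ℝ) ≤ ((p:ℝ)^r)⁻¹ * (1 - (p:ℝ)⁻¹) * ((p:ℝ)⁻¹)^k :=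
      mul_nonneg hAnn (by positivity)
    exact (mul_le_mul_of_nonneg_right h1 hcnn).trans_eq (by rw [hMc]; ring)
  have hfg0 : f 0 < gg 0 := by
    rw [hf, hgg]
    simp only []
    rw [hsplit 0]
    have hstrict : kappa p α ^ (0 + r) < kappa p α ^ (r - 1) := by
      apply pow_lt_pow_right_of_lt_one₀ hκ0 hκ1 (by omega)
    have h1 : (lam - kappa p α ^ (0 + r))⁻¹ < (lam - kappa p α ^ (r-1))⁻¹ := by
      rw [inv_lt_inv₀ (by linarith [hlamt 0]) hlam1]
      linarith
    have hcpos : (0:ℝ) < ((p:ℝ)^r)⁻¹ * (1 - (p:ℝ)⁻¹) * ((p:ℝ)⁻¹)^(0:ℕ) := by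
      apply mul_pos (mul_pos (by positivity) (by linarith)) (by positivity)
    exact (mul_lt_mul_of_pos_right h1 hcpos).trans_eq (by rw [hMc]; ring)
  have hggsum : HasSum gg (Mc * (1 - (p:ℝ)⁻¹)⁻¹) :=
    (hasSum_geometric_of_lt_one hq.le hq1).mul_left Mc
  have hMcval : Mc * (1 - (p:ℝ)⁻¹)⁻¹ = M := by
    have h0 : (1:ℝ) - (p:ℝ)⁻¹ ≠ 0 := by linarith
    rw [hMc, hM, mul_assoc, mul_assoc, mul_inv_cancel₀ h0, mul_one, mul_comm]
  rw [hMcval] at hggsum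
  have hbtailsum : HasSum (fun k => b (k + r)) T :=
    ((summable_nat_add_iff r).2 hbsummable).hasSum
  have hfsum : HasSum f (-T) := by
    have h := hbtailsum.neg
    simp only [hbtail, neg_neg] at h
    exact h
  have hTneg : (0:ℝ) < -T :=
    hasSum_lt (f := fun _ => (0:ℝ)) (i := 0) (fun k => (hfpos k).le) (hfpos 0) hasSum_zero hfsum
  have hTM : -T < M := hasSum_lt hfg hfg0 hfsum hggsum
  have hgoal : ((p:ℝ)^r)⁻¹ / (lam - kappa p α ^ (r-1)) = M := by
    rw [hM, div_eq_mul_inv]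
  refine ⟨him, ?_, ?_⟩
  · rw [hAeq]
    linarith
  · rw [hAeq, hgoal]
    linarith
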